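/- Fix γ ≥ 1 and a cost c with 0 < c(x) ≤ c_max for all x. For any path 𝛃 of length K ending at β with K > ‖β‖₀ and any path 𝛃' of length ‖β‖₀ ending at β, if additionally γ·c(β) > c(β) + c_max·Σ_{k=1}^{‖β‖₀−1} γ^{k−‖β‖₀} then L_γ over paths can strictly prefer shorter paths; formally: γ^{‖β‖₀}(γ c(β) − c(β'_{‖β‖₀}) − c_max Σ_{k=1}^{‖β‖₀−1} γ^{k−‖β‖₀}) ≤ L_γ(𝛃) − L_γ(𝛃'). -/

import Mathlib

/-! The longer path pays at least `γ ^ K * c β ≥ γ ^ (‖β‖₀ + 1) * c β` for its last step alone,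
while the minimal path pays `γ ^ ‖β‖₀ * c β'` for its last step and at most `cmax * γ ^ k` for
each earlier step `k`. -/

open Finset Filter

/-- Number of coordinates in which two vectors differ (the ℓ₀ "norm" of their difference). -/
noncomputable def diffCount {d : ℕ} (x y : Fin d → ℝ) : ℕ :=
  (Finset.univ.filter (fun i => x i ≠ y i)).card

/-- A coordinate path of length `K`: starts at `0`, each step changes at most one coordinate. -/
def IsPath {d : ℕ} (K : ℕ) (p : ℕ → Fin d → ℝ) : Prop :=
  p 0 = 0 ∧ ∀ k, 1 ≤ k → k ≤ K → diffCount (p (k - 1)) (p k) ≤ 1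

/-- Number of nonzero coordinates of a vector (‖β‖₀). -/
noncomputable def sparsity {d : ℕ} (β : Fin d → ℝ) : ℕ :=
  (Finset.univ.filter (fun i => β i ≠ 0)).card

/-- The cost sequence of a path of length `K`. -/
def costSeq {d : ℕ} (c : (Fin d → ℝ) → ℝ) (K : ℕ) (p : ℕ → Fin d → ℝ) : ℕ → ℝ :=
  fun k => if 1 ≤ k ∧ k ≤ K then c (p k) else 0

/-- Geometric-weighted interpretability loss of a path of length `K`. -/
noncomputable def pathLoss {d : ℕ} (c : (Fin d → ℝ) → ℝ) (γ : ℝ) (K : ℕ)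
    (p : ℕ → Fin d → ℝ) : ℝ :=
  ∑ k ∈ Finset.Icc 1 K, γ ^ k * c (p k)

/-- Model interpretability: infimum of the path loss over all explanations of `β`. -/
noncomputable def modelLoss {d : ℕ} (c : (Fin d → ℝ) → ℝ) (γ : ℝ) (β : Fin d → ℝ) : ℝ :=
  sInf {v : ℝ | ∃ K p, IsPath K p ∧ p K = β ∧ v = pathLoss c γ K p}

section PathLoss

variable {d : ℕ} {c : (Fin d → ℝ) → ℝ} {γ : ℝ} {p : ℕ → Fin d → ℝ}

theorem pathLoss_succ (n : ℕ) :
    pathLoss c γ (n + 1) p = pathLoss c γ n p + γ ^ (n + 1) * c (p (n + 1)) :=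
  Finset.sum_Icc_succ_top (Nat.le_add_left 1 n) _

theorem pow_mul_le_pathLoss (hc : ∀ x, 0 ≤ c x) (hγ : 0 ≤ γ) {K k : ℕ}
    (hk : k ∈ Finset.Icc 1 K) : γ ^ k * c (p k) ≤ pathLoss c γ K p :=
  Finset.single_le_sum (f := fun k => γ ^ k * c (p k))
    (fun _ _ => mul_nonneg (pow_nonneg hγ _) (hc _)) hk

theorem pathLoss_le_mul_sum {cmax : ℝ} (hc : ∀ x, c x ≤ cmax) (hγ : 0 ≤ γ) (n : ℕ) :
    pathLoss c γ n p ≤ cmax * ∑ k ∈ Finset.Icc 1 n, γ ^ k := by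
  rw [Finset.mul_sum]
  exact Finset.sum_le_sum fun k _ => by
    rw [mul_comm cmax]
    exact mul_le_mul_of_nonneg_left (hc _) (pow_nonneg hγ _)

theorem pathLoss_le_last_add {cmax : ℝ} (hc : ∀ x, 0 ≤ c x ∧ c x ≤ cmax) (hγ : 0 ≤ γ)
    (n : ℕ) :
    pathLoss c γ n p ≤ γ ^ n * c (p n) + cmax * ∑ k ∈ Finset.Icc 1 (n - 1), γ ^ k := by
  cases n with
  | zero => simpa [pathLoss] using (hc _).1
  | succ n =>
    rw [pathLoss_succ, Nat.add_sub_cancel, add_comm (γ ^ (n + 1) * _)]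
    exact add_le_add_left (pathLoss_le_mul_sum (fun x => (hc x).2) hγ n) _

end PathLoss

theorem stmt17_general {d : ℕ} (c : (Fin d → ℝ) → ℝ) (cmax : ℝ)
    (hc : ∀ x, 0 < c x ∧ c x ≤ cmax) (γ : ℝ) (hγ : 1 ≤ γ)
    (β : Fin d → ℝ) (K : ℕ) (p p' : ℕ → Fin d → ℝ)
    (hpend : p K = β) (hK : sparsity β < K) :
    γ ^ sparsity β * (γ * c β - c (p' (sparsity β))
        - cmax * ∑ k ∈ Finset.Icc 1 (sparsity β - 1), γ ^ k / γ ^ sparsity β)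
      ≤ pathLoss c γ K p - pathLoss c γ (sparsity β) p' := by
  set s := sparsity β
  have hγ0 : 0 ≤ γ := zero_le_one.trans hγ
  have hlong : γ ^ (s + 1) * c β ≤ pathLoss c γ K p :=
    calc γ ^ (s + 1) * c β ≤ γ ^ K * c (p K) := by
          rw [hpend]; exact mul_le_mul_of_nonneg_right (pow_le_pow_right₀ hγ hK) (hc β).1.le
      _ ≤ pathLoss c γ K p :=
          pow_mul_le_pathLoss (fun x => (hc x).1.le) hγ0 (Finset.mem_Icc.2 ⟨by omega, le_rfl⟩)
  have hshort := pathLoss_le_last_add (p := p') (fun x => ⟨(hc x).1.le, (hc x).2⟩) hγ0 s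
  have hγs : γ ^ s ≠ 0 := pow_ne_zero _ (by positivity)
  have hexpand : γ ^ s * (γ * c β - c (p' s) - cmax * ∑ k ∈ Finset.Icc 1 (s - 1), γ ^ k / γ ^ s)
      = γ ^ (s + 1) * c β - γ ^ s * c (p' s) - cmax * ∑ k ∈ Finset.Icc 1 (s - 1), γ ^ k := by
    rw [← Finset.sum_div]
    field_simp
    ring
  rw [hexpand]
  linarith

/-- Quantitative comparison showing that for γ ≥ 1 the loss of a path longer than
‖β‖₀ exceeds that of a minimum-length path by the stated bound. -/
theorem stmt17 {d : ℕ} (c : (Fin d → ℝ) → ℝ) (cmax : ℝ)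
    (hc : ∀ x, 0 < c x ∧ c x ≤ cmax) (γ : ℝ) (hγ : 1 ≤ γ)
    (β : Fin d → ℝ) (K : ℕ) (p p' : ℕ → Fin d → ℝ)
    (hp : IsPath K p) (hpend : p K = β) (hK : sparsity β < K)
    (hp' : IsPath (sparsity β) p') (hp'end : p' (sparsity β) = β)
    (hextra : c β + cmax * ∑ k ∈ Finset.Icc 1 (sparsity β - 1), γ ^ k / γ ^ sparsity β
        < γ * c β) :
    γ ^ sparsity β * (γ * c β - c (p' (sparsity β))
        - cmax * ∑ k ∈ Finset.Icc 1 (sparsity β - 1), γ ^ k / γ ^ sparsity β)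
      ≤ pathLoss c γ K p - pathLoss c γ (sparsity β) p' :=
  stmt17_general c cmax hc γ hγ β K p p' hpend hK
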